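/- The Pappus graph admits no coherent 6-cycle orientation of level 3; that is, there is no choice, for each 6-cycle of the Pappus graph, of one of its two directions such that every path v_0, v_1, v_2 on 3 distinct vertices with consecutive vertices adjacent occurs as a consecutive segment of exactly one chosen directed 6-cycle. -/

import Mathlib

/-- A directed `g`-cycle of a simple graph `G`: an injective map `c : ZMod g → V`
with `c i` adjacent to `c (i+1)` for all `i`. -/
def IsDirCycleOn {V : Type*} (G : SimpleGraph V) (g : ℕ) (c : ZMod g → V) : Prop :=
  Function.Injective c ∧ ∀ i : ZMod g, G.Adj (c i) (c (i + 1))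

/-- A sequence of `k` distinct vertices with consecutive vertices adjacent. -/
def IsPathSeq {V : Type*} (G : SimpleGraph V) (k : ℕ) (v : Fin k → V) : Prop :=
  Function.Injective v ∧ ∀ (j : ℕ) (h : j + 1 < k),
    G.Adj (v ⟨j, Nat.lt_of_succ_lt h⟩) (v ⟨j + 1, h⟩)

/-- A coherent `g`-cycle orientation of level `k` of `G`: a set `D` of directed
`g`-cycles of `G` containing, for every `g`-cycle of `G`, exactly one of its two
directions (one representative up to rotation), and such that every sequence of `k`
distinct vertices `v 0, …, v (k-1)` with consecutive vertices adjacent occurs as a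
consecutive segment `(c i, c (i+1), …, c (i+k-1))` of exactly one `c ∈ D`. -/
def IsCoherentOrientation {V : Type*} (G : SimpleGraph V) (g k : ℕ)
    (D : Set (ZMod g → V)) : Prop :=
  (∀ c ∈ D, IsDirCycleOn G g c) ∧
  (∀ c : ZMod g → V, IsDirCycleOn G g c →
    ∃! c', c' ∈ D ∧
      ((∃ r : ZMod g, ∀ i, c' i = c (i + r)) ∨ (∃ r : ZMod g, ∀ i, c' i = c (r - i)))) ∧
  (∀ v : Fin k → V, IsPathSeq G k v →
    ∃! c, c ∈ D ∧ ∃ i : ZMod g, ∀ j : Fin k, c (i + ((j : ℕ) : ZMod g)) = v j)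

/-- The Pappus graph: vertex set `ZMod 18`, `i` adjacent to `i+1`, together with the
extra edges `{1+6x, 6+6x}`, `{2+6x, 9+6x}`, `{4+6x, 11+6x}`. -/
def pappusGraph : SimpleGraph (ZMod 18) :=
  SimpleGraph.fromRel (fun i j =>
    j = i + 1 ∨ ∃ x : ZMod 18,
      (i = 1 + 6 * x ∧ j = 6 + 6 * x) ∨ (i = 2 + 6 * x ∧ j = 9 + 6 * x) ∨
      (i = 4 + 6 * x ∧ j = 11 + 6 * x))

/-!
Fix a coherent orientation of level 3. If a 2-path lies in exactly two directed hexagons, the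
orientation contains exactly one of them, and it contains every hexagon in exactly one of its two
directions. In the Pappus graph the hexagons `[0,1,2,3,14,13]`, `[0,1,2,9,10,17]`,
`[0,1,6,5,16,17]`, `[1,2,3,4,5,6]` are linked cyclically by the 2-paths `(0,1,2)`, `(1,0,17)`,
`(1,6,5)`, `(1,2,3)`, each of which lies in exactly two hexagons. The resulting exclusive-or
constraints form an odd cycle (of length 7) on the chosen directions, which is unsatisfiable.
-/

section CoherentOrientation

variable {V : Type*} {G : SimpleGraph V} {g k : ℕ} {D : Set (ZMod g → V)}

def ContainsRotation (D : Set (ZMod g → V)) (c : ZMod g → V) : Prop :=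
  ∃ r : ZMod g, (fun i => c (i + r)) ∈ D

theorem containsRotation_rotate_iff {c : ZMod g → V} (s : ZMod g) :
    ContainsRotation D (fun i => c (i + s)) ↔ ContainsRotation D c := by
  constructor
  · rintro ⟨r, hr⟩
    exact ⟨r + s, by simpa only [add_assoc] using hr⟩
  · rintro ⟨r, hr⟩
    refine ⟨r - s, ?_⟩
    simpa only [sub_add_cancel, add_sub_assoc'] using hr

theorem IsDirCycleOn.rotate {c : ZMod g → V} (hc : IsDirCycleOn G g c) (r : ZMod g) :
    IsDirCycleOn G g (fun i => c (i + r)) :=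
  ⟨hc.1.comp (add_left_injective r), fun i => by simpa only [add_right_comm] using hc.2 (i + r)⟩

theorem IsCoherentOrientation.xor_of_path [NeZero k] (hD : IsCoherentOrientation G g k D)
    {v : Fin k → V} (hv : IsPathSeq G k v) {A B : ZMod g → V} (hA : Function.Injective A)
    (hAv : ∀ j : Fin k, A (j : ℕ) = v j) (hBv : ∀ j : Fin k, B (j : ℕ) = v j) (hAB : A ≠ B)
    (hcls : ∀ c, IsDirCycleOn G g c → (∀ j : Fin k, c (j : ℕ) = v j) → c = A ∨ c = B) :
    Xor (ContainsRotation D A) (ContainsRotation D B) := by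
  obtain ⟨c, ⟨hcD, i, hci⟩, huniq⟩ := hD.2.2 v hv
  have hcontains : ∀ (X : ZMod g → V) (r : ZMod g), (∀ j : Fin k, X (j : ℕ) = v j) →
      ∃ i : ZMod g, ∀ j : Fin k, X (i + (j : ℕ) + r) = v j :=
    fun X r hX => ⟨-r, fun j => by rw [neg_add_cancel_comm, hX]⟩
  rw [xor_iff_or_and_not_and]
  constructor
  · have hc := hcls _ ((hD.1 c hcD).rotate i) (fun j => by simpa only [add_comm] using hci j)
    refine hc.imp (fun h => ⟨-i, ?_⟩) (fun h => ⟨-i, ?_⟩) <;>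
      simpa only [← h, neg_add_cancel_right] using hcD
  · rintro ⟨⟨r, hr⟩, ⟨s, hs⟩⟩
    have hrs : (fun x => A (x + r)) = fun x => B (x + s) :=
      (huniq _ ⟨hr, hcontains A r hAv⟩).trans (huniq _ ⟨hs, hcontains B s hBv⟩).symm
    have hB0 : B 0 = A 0 := by simpa using (hBv 0).trans (hAv 0).symm
    have h0 : A (-s + r) = A 0 := by simpa [hB0] using congrFun hrs (-s)
    obtain rfl : r = s := (neg_add_eq_zero.mp (hA h0)).symm
    exact hAB (funext fun x => by simpa using congrFun hrs (x - r))

theorem IsCoherentOrientation.xor_reverse (hD : IsCoherentOrientation G g k D)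
    (h2 : (2 : ZMod g) ≠ 0) {F : ZMod g → V} (hF : IsDirCycleOn G g F) (s : ZMod g) :
    Xor (ContainsRotation D F) (ContainsRotation D fun i => F (s - i)) := by
  obtain ⟨c, ⟨hcD, hc⟩, huniq⟩ := hD.2.1 F hF
  rw [xor_iff_or_and_not_and]
  constructor
  · rcases hc with ⟨r, hr⟩ | ⟨r, hr⟩
    · exact Or.inl ⟨r, by simpa only [← hr] using hcD⟩
    · refine Or.inr ⟨s - r, ?_⟩
      convert hcD using 1
      funext i
      rw [hr]
      ring_nf
  · rintro ⟨⟨r₁, h₁⟩, ⟨r₂, h₂⟩⟩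
    have heq := (huniq _ ⟨h₁, Or.inl ⟨r₁, fun _ => rfl⟩⟩).trans
      (huniq _ ⟨h₂, Or.inr ⟨s - r₂, fun i => by ring_nf⟩⟩).symm
    have hlin : ∀ i : ZMod g, i + r₁ = s - (i + r₂) := fun i =>
      hF.1 (by simpa using congrFun heq i)
    apply h2
    linear_combination hlin 1 - hlin 0

theorem IsDirCycleOn.isPathSeq {c : ZMod g → V} (hc : IsDirCycleOn G g c)
    (hk : k ≤ g) : IsPathSeq G k (fun j : Fin k => c (j : ℕ)) := by
  refine ⟨hc.1.comp fun i j hij => Fin.ext ?_, fun j hj => by simpa using hc.2 j⟩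
  rw [ZMod.natCast_eq_natCast_iff'] at hij
  rwa [Nat.mod_eq_of_lt (i.2.trans_le hk), Nat.mod_eq_of_lt (j.2.trans_le hk)] at hij

theorem funext_zmod_six {c d : ZMod 6 → V} (h0 : c 0 = d 0) (h1 : c 1 = d 1) (h2 : c 2 = d 2)
    (h3 : c 3 = d 3) (h4 : c 4 = d 4) (h5 : c 5 = d 5) : c = d := by
  funext i
  fin_cases i <;> assumption

/-- `hcompl` says that `A` and `B` are the only completions of the 2-path `A 0, A 1, A 2` to a
directed hexagon, phrased over vertex triples so that it can be checked by enumeration. -/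
theorem IsCoherentOrientation.xor_of_hexagon_completions {D : Set (ZMod 6 → V)}
    (hD : IsCoherentOrientation G 6 3 D) {A B : ZMod 6 → V} (hA : IsDirCycleOn G 6 A)
    (hBA : ∀ j : Fin 3, B (j : ℕ) = A (j : ℕ)) (hAB : A ≠ B)
    (hcompl : ∀ x y z : V, G.Adj (A 2) x → G.Adj x y → G.Adj y z → G.Adj z (A 0) →
      [A 0, A 1, A 2, x, y, z].Nodup →
      (x, y, z) = (A 3, A 4, A 5) ∨ (x, y, z) = (B 3, B 4, B 5)) :
    Xor (ContainsRotation D A) (ContainsRotation D B) := by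
  refine hD.xor_of_path (hA.isPathSeq (by norm_num)) hA.1 (fun _ => rfl) hBA hAB
    fun c hc hcA => ?_
  have h0 : c 0 = A 0 := hcA 0
  have h1 : c 1 = A 1 := hcA 1
  have h2 : c 2 = A 2 := hcA 2
  have hB0 : B 0 = A 0 := hBA 0
  have hB1 : B 1 = A 1 := hBA 1
  have hB2 : B 2 = A 2 := hBA 2
  have hnodup : [A 0, A 1, A 2, c 3, c 4, c 5].Nodup := by
    rw [← h0, ← h1, ← h2]
    exact List.nodup_ofFn.mpr hc.1
  rcases hcompl _ _ _ (h2 ▸ hc.2 2) (hc.2 3) (hc.2 4) (h0 ▸ hc.2 5) hnodup with h | h <;>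
    obtain ⟨h3, h4, h5⟩ := by simpa only [Prod.mk.injEq] using h
  · exact Or.inl (funext_zmod_six h0 h1 h2 h3 h4 h5)
  · exact Or.inr (funext_zmod_six (h0.trans hB0.symm) (h1.trans hB1.symm) (h2.trans hB2.symm)
      h3 h4 h5)

end CoherentOrientation

instance : DecidableRel pappusGraph.Adj := fun a b =>
  decidable_of_iff' _ (SimpleGraph.fromRel_adj _ a b)

def pappusHexagon₁ : ZMod 6 → ZMod 18 := ![0, 1, 2, 3, 14, 13]
def pappusHexagon₂ : ZMod 6 → ZMod 18 := ![0, 1, 2, 9, 10, 17]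
def pappusHexagon₃ : ZMod 6 → ZMod 18 := ![0, 1, 6, 5, 16, 17]
def pappusHexagon₄ : ZMod 6 → ZMod 18 := ![1, 2, 3, 4, 5, 6]

set_option maxHeartbeats 1000000 in
/-- The Pappus graph admits no coherent 6-cycle orientation of level 3. -/
theorem pappus_no_coherent_orientation :
    ¬ ∃ D : Set (ZMod 6 → ZMod 18), IsCoherentOrientation pappusGraph 6 3 D := by
  rintro ⟨D, hD⟩
  have p012 := hD.xor_of_hexagon_completions (A := pappusHexagon₁) (B := pappusHexagon₂)
    ⟨by decide, by decide⟩ (by decide) (by decide) (by decide)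
  have p123 := hD.xor_of_hexagon_completions (A := fun i => pappusHexagon₁ (i + 1))
    (B := pappusHexagon₄) ⟨by decide, by decide⟩ (by decide) (by decide) (by decide)
  have p1017 := hD.xor_of_hexagon_completions (A := fun i => pappusHexagon₂ (1 - i))
    (B := fun i => pappusHexagon₃ (1 - i))
    ⟨by decide, by decide⟩ (by decide) (by decide) (by decide)
  have p165 := hD.xor_of_hexagon_completions (A := fun i => pappusHexagon₃ (i + 1))
    (B := fun i => pappusHexagon₄ (0 - i))
    ⟨by decide, by decide⟩ (by decide) (by decide) (by decide)
  have rev₂ := hD.xor_reverse (by decide) (F := pappusHexagon₂) ⟨by decide, by decide⟩ 1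
  have rev₃ := hD.xor_reverse (by decide) (F := pappusHexagon₃) ⟨by decide, by decide⟩ 1
  have rev₄ := hD.xor_reverse (by decide) (F := pappusHexagon₄) ⟨by decide, by decide⟩ 0
  rw [containsRotation_rotate_iff] at p123 p165
  simp only [xor_iff_iff_not] at p012 p123 p1017 p165 rev₂ rev₃ rev₄
  tauto
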